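/- For every subset D ⊆ {1,…,n−1}, the vector v_D generates P_D as a right H𝔖_n-module: P_D = v_D · H𝔖_n. -/

import Mathlib

open scoped Classical

set_option maxHeartbeats 1000000
set_option synthInstance.maxHeartbeats 400000

noncomputable section

/-- The symmetric group on `{1, …, n}`, 0-indexed as permutations of `Fin n`
(so positions/descents are indexed by `i ∈ {0, …, n-2}` instead of `{1, …, n-1}`). -/
abbrev PermN (n : ℕ) := Equiv.Perm (Fin n)

/-- The vector space `ℂ𝔖ₙ` with basis the symmetric group. -/
abbrev CS (n : ℕ) := Equiv.Perm (Fin n) →₀ ℂ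

/-- The elementary transposition `sᵢ` exchanging `i` and `i+1` (0-indexed). -/
def swapAt (n i : ℕ) (h : i + 1 < n) : PermN n :=
  Equiv.swap ⟨i, Nat.lt_of_succ_lt h⟩ ⟨i + 1, h⟩

/-- The operator `σᵢ` on `ℂ𝔖ₙ`: right multiplication by `sᵢ` (action on positions),
`μ ↦ μ sᵢ`. -/
def sigmaOp (n i : ℕ) : Module.End ℂ (CS n) :=
  if h : i + 1 < n then Finsupp.lmapDomain ℂ ℂ (fun μ => μ * swapAt n i h) else 1

/-- The elementary decreasing sorting operator `πᵢ` on `ℂ𝔖ₙ`: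
`μ ↦ μ` if `μᵢ > μᵢ₊₁` and `μ ↦ μ sᵢ` otherwise. -/
def piOp (n i : ℕ) : Module.End ℂ (CS n) :=
  if h : i + 1 < n then
    Finsupp.lmapDomain ℂ ℂ (fun μ : PermN n =>
      if μ ⟨i + 1, h⟩ < μ ⟨i, Nat.lt_of_succ_lt h⟩ then μ else μ * swapAt n i h)
  else 1

/-- The operator `σ̄ᵢ` on `ℂ𝔖ₙ`: left multiplication by `sᵢ` (action on values),
`μ ↦ sᵢ μ`. -/
def sigmaBarOp (n i : ℕ) : Module.End ℂ (CS n) :=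
  if h : i + 1 < n then Finsupp.lmapDomain ℂ ℂ (fun μ => swapAt n i h * μ) else 1

/-- The operator `σ_σ` of right multiplication by a permutation `σ`
(equal to the product of the `σᵢ` along any reduced word for `σ`). -/
def rightMulOp (n : ℕ) (σ : PermN n) : Module.End ℂ (CS n) :=
  Finsupp.lmapDomain ℂ ℂ (fun μ => μ * σ)

/-- The algebra `H𝔖ₙ`: the subalgebra of `End(ℂ𝔖ₙ)` generated by the operators
`σ₁, …, σ_{n-1}, π₁, …, π_{n-1}`.

Note on conventions: the paper composes operators left to right, `v·(fg) = (v·f)·g`,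
while multiplication in `Module.End` is `(f * g) v = f (g v)`.  Hence the paper's
product `f·g` is `g * f` here.  This does not affect the generated subalgebra. -/
def HS (n : ℕ) : Subalgebra ℂ (Module.End ℂ (CS n)) :=
  Algebra.adjoin ℂ
    ({f | ∃ i, ∃ _ : i + 1 < n, f = sigmaOp n i} ∪ {f | ∃ i, ∃ _ : i + 1 < n, f = piOp n i})

/-- The descent set `Des(μ) = {i : μᵢ > μᵢ₊₁}` (0-indexed positions). -/
def Des (n : ℕ) (μ : PermN n) : Set ℕ :=
  {i | ∃ h : i + 1 < n, μ ⟨i + 1, h⟩ < μ ⟨i, Nat.lt_of_succ_lt h⟩}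

/-- The module `P_D`: the vectors of `ℂ𝔖ₙ` that are left `i`-antisymmetric
for every `i ∉ D` (0-indexed, `i+1 < n`). -/
def PD (n : ℕ) (D : Set ℕ) : Submodule ℂ (CS n) :=
  ⨅ i : {i : ℕ // i + 1 < n ∧ i ∉ D}, LinearMap.ker (1 + sigmaBarOp n i.1)

/-- The Young subgroup `𝔖_⟨D⟩` generated by the `sᵢ` for `i ∉ D`. -/
def Young (n : ℕ) (D : Set ℕ) : Subgroup (PermN n) :=
  Subgroup.closure {g | ∃ i, ∃ h : i + 1 < n, i ∉ D ∧ g = swapAt n i h}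

/-- The vector `v_D = ∑_{ν ∈ 𝔖_⟨D⟩} (-1)^{ℓ(ν)} ν` (the sign `(-1)^{ℓ(ν)}` is the
signature of `ν`). -/
def vD (n : ℕ) (D : Set ℕ) : CS n :=
  ∑ᶠ ν ∈ (Young n D : Set (PermN n)),
    ((Equiv.Perm.sign ν : ℤ) : ℂ) • Finsupp.single ν 1

/-- The vector `v_σ := v_{Des(σ⁻¹)} · σ_σ`. -/
def vPerm (n : ℕ) (σ : PermN n) : CS n :=
  rightMulOp n σ (vD n (Des n σ⁻¹))


/-! `P_D` is stable under `H𝔖ₙ`: `σᵢ` acts on positions and so commutes with left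
multiplication, and `πᵢ` preserves left antisymmetry under an adjacent transposition `t`
because on each basis vector `μ` either `πᵢ` commutes with `t`, or `tμ = μsᵢ`, which `πᵢ`
sorts to the same permutation as `μ`.

Conversely, the antisymmetrizer `A = ∑_{ν ∈ 𝔖_⟨D⟩} sign(ν) ν` (acting on the left) is
multiplication by `|𝔖_⟨D⟩|` on `P_D`, and `v_D = A·1`. Right multiplication by
`v = ∑ v_μ μ` commutes with `A` and lies in `H𝔖ₙ`, being a combination of products of the
`σᵢ`; hence `v_D · v = A v = |𝔖_⟨D⟩| v`. -/

open Finsupp Equiv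

def leftMulOp (n : ℕ) (ν : PermN n) : Module.End ℂ (CS n) :=
  lmapDomain ℂ ℂ (ν * ·)

section Operators

variable {n : ℕ}

@[simp]
lemma leftMulOp_single (ν μ : PermN n) (c : ℂ) :
    leftMulOp n ν (single μ c) = single (ν * μ) c :=
  mapDomain_single

@[simp]
lemma rightMulOp_single (σ μ : PermN n) (c : ℂ) :
    rightMulOp n σ (single μ c) = single (μ * σ) c :=
  mapDomain_single

lemma leftMulOp_one : leftMulOp n 1 = 1 :=
  lhom_ext fun μ c => by simp

lemma leftMulOp_mul (a b : PermN n) :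
    leftMulOp n (a * b) = leftMulOp n a * leftMulOp n b :=
  lhom_ext fun μ c => by simp [mul_assoc]

lemma rightMulOp_one : rightMulOp n 1 = 1 :=
  lhom_ext fun μ c => by simp

lemma rightMulOp_mul (a b : PermN n) :
    rightMulOp n (a * b) = rightMulOp n b * rightMulOp n a :=
  lhom_ext fun μ c => by simp [mul_assoc]

lemma commute_leftMulOp_rightMulOp (ν σ : PermN n) :
    Commute (leftMulOp n ν) (rightMulOp n σ) :=
  lhom_ext fun μ c => by simp [mul_assoc]

lemma leftMulOp_swapAt_mul_self {i : ℕ} (h : i + 1 < n) :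
    leftMulOp n (swapAt n i h) * leftMulOp n (swapAt n i h) = 1 := by
  rw [← leftMulOp_mul, swapAt, swap_mul_self, leftMulOp_one]

lemma sign_swapAt {i : ℕ} (h : i + 1 < n) : Perm.sign (swapAt n i h) = -1 :=
  Perm.sign_swap (by simp [Fin.ext_iff])

lemma sigmaOp_eq {i : ℕ} (h : i + 1 < n) : sigmaOp n i = rightMulOp n (swapAt n i h) := by
  rw [sigmaOp, dif_pos h]; rfl

lemma sigmaBarOp_eq {i : ℕ} (h : i + 1 < n) :
    sigmaBarOp n i = leftMulOp n (swapAt n i h) := by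
  rw [sigmaBarOp, dif_pos h]; rfl

end Operators

section Antisymmetry

variable {n : ℕ} {D : Set ℕ}

lemma mem_PD_iff {v : CS n} :
    v ∈ PD n D ↔ ∀ i (h : i + 1 < n), i ∉ D → leftMulOp n (swapAt n i h) v = -v := by
  simp only [PD, Submodule.mem_iInf, LinearMap.mem_ker, LinearMap.add_apply,
    Module.End.one_apply, Subtype.forall, and_imp, add_eq_zero_iff_eq_neg']
  exact forall_congr' fun i => ⟨fun H h hi => sigmaBarOp_eq h ▸ H h hi,
    fun H h hi => (sigmaBarOp_eq h).symm ▸ H h hi⟩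

lemma leftMulOp_apply_of_mem_PD {v : CS n} (hv : v ∈ PD n D) {ν : PermN n}
    (hν : ν ∈ Young n D) : leftMulOp n ν v = ((Perm.sign ν : ℤ) : ℂ) • v := by
  induction hν using Subgroup.closure_induction_left with
  | one => simp [leftMulOp_one]
  | mul_left t ht ν _ ih =>
    obtain ⟨i, h, hi, rfl⟩ := ht
    rw [leftMulOp_mul, Module.End.mul_apply, ih, map_smul, mem_PD_iff.mp hv i h hi]
    simp [sign_swapAt]
  | inv_mul_cancel t ht ν _ ih =>
    obtain ⟨i, h, hi, rfl⟩ := ht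
    rw [swapAt, swap_inv, ← swapAt, leftMulOp_mul, Module.End.mul_apply, ih, map_smul,
      mem_PD_iff.mp hv i h hi]
    simp [sign_swapAt]

end Antisymmetry

def antisymmetrizer (n : ℕ) (D : Set ℕ) : Module.End ℂ (CS n) :=
  ∑ ν : Young n D, ((Perm.sign (ν : PermN n) : ℤ) : ℂ) • leftMulOp n ν

section Antisymmetrizer

variable {n : ℕ} {D : Set ℕ}

lemma vD_eq_antisymmetrizer : vD n D = antisymmetrizer n D (single 1 1) := by
  rw [vD, ← finsum_set_coe_eq_finsum_mem, finsum_eq_sum_of_fintype, antisymmetrizer,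
    LinearMap.sum_apply]
  exact Finset.sum_congr rfl fun ν _ => by simp

lemma leftMulOp_mul_antisymmetrizer {t : PermN n} (ht : t ∈ Young n D) :
    leftMulOp n t * antisymmetrizer n D =
      ((Perm.sign t : ℤ) : ℂ) • antisymmetrizer n D := by
  simp only [antisymmetrizer, Finset.mul_sum, Finset.smul_sum, mul_smul_comm,
    ← leftMulOp_mul]
  refine Fintype.sum_equiv (Equiv.mulLeft ⟨t, ht⟩) _ _ fun ν => ?_
  simp [smul_smul, ← mul_assoc, ← Int.cast_mul, ← Units.val_mul]

lemma vD_mem_PD : vD n D ∈ PD n D := by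
  refine mem_PD_iff.mpr fun i h hi => ?_
  have ht : swapAt n i h ∈ Young n D := Subgroup.subset_closure ⟨i, h, hi, rfl⟩
  rw [vD_eq_antisymmetrizer, ← Module.End.mul_apply, leftMulOp_mul_antisymmetrizer ht,
    sign_swapAt]
  simp

lemma antisymmetrizer_apply_of_mem_PD {v : CS n} (hv : v ∈ PD n D) :
    antisymmetrizer n D v = (Fintype.card (Young n D) : ℂ) • v := by
  simp [antisymmetrizer, leftMulOp_apply_of_mem_PD hv, smul_smul, ← Int.cast_mul,
    ← Units.val_mul, Nat.cast_smul_eq_nsmul]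

lemma commute_antisymmetrizer_rightMulOp (σ : PermN n) :
    Commute (antisymmetrizer n D) (rightMulOp n σ) :=
  .sum_left _ _ _ fun ν _ => .smul_left (commute_leftMulOp_rightMulOp (ν : PermN n) σ) _

end Antisymmetrizer

lemma rightMulOp_mem_HS : ∀ {n : ℕ} (σ : PermN n), rightMulOp n σ ∈ HS n
  | 0, σ => by rw [Subsingleton.elim σ 1, rightMulOp_one]; exact one_mem _
  | m + 1, σ => by
    have hσ : σ ∈ Submonoid.closure (Set.range fun i : Fin m => swap i.castSucc i.succ) := by
      rw [Perm.mclosure_swap_castSucc_succ]; trivial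
    induction hσ using Submonoid.closure_induction with
    | one => rw [rightMulOp_one]; exact one_mem _
    | mem _ hx =>
      obtain ⟨i, rfl⟩ := hx
      have h : (i : ℕ) + 1 < m + 1 := Nat.succ_lt_succ i.isLt
      change rightMulOp _ (swapAt _ i h) ∈ _
      rw [← sigmaOp_eq h]
      exact Algebra.subset_adjoin (Or.inl ⟨i, h, rfl⟩)
    | mul x y _ _ hx hy => rw [rightMulOp_mul]; exact mul_mem hy hx

def rightConvOp {n : ℕ} (v : CS n) : Module.End ℂ (CS n) :=
  v.sum fun μ c => c • rightMulOp n μ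

section RightConv

variable {n : ℕ}

lemma rightConvOp_mem_HS (v : CS n) : rightConvOp v ∈ HS n :=
  Subalgebra.sum_mem _ fun μ _ => Subalgebra.smul_mem _ (rightMulOp_mem_HS μ) _

lemma rightConvOp_apply_single_one (v : CS n) : rightConvOp v (single 1 1) = v := by
  simp [rightConvOp]

lemma commute_antisymmetrizer_rightConvOp (D : Set ℕ) (v : CS n) :
    Commute (antisymmetrizer n D) (rightConvOp v) :=
  .sum_right _ _ _ fun μ _ => .smul_right (commute_antisymmetrizer_rightMulOp μ) _

lemma rightConvOp_apply_vD {D : Set ℕ} {v : CS n} (hv : v ∈ PD n D) :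
    rightConvOp v (vD n D) = (Fintype.card (Young n D) : ℂ) • v := by
  rw [vD_eq_antisymmetrizer, ← Module.End.mul_apply,
    ← (commute_antisymmetrizer_rightConvOp D v).eq, Module.End.mul_apply,
    rightConvOp_apply_single_one, antisymmetrizer_apply_of_mem_PD hv]

end RightConv

def descSort {n i : ℕ} (h : i + 1 < n) (μ : PermN n) : PermN n :=
  if μ ⟨i + 1, h⟩ < μ ⟨i, Nat.lt_of_succ_lt h⟩ then μ else μ * swapAt n i h

section Sorting

variable {n i j : ℕ}

lemma piOp_eq (h : i + 1 < n) : piOp n i = lmapDomain ℂ ℂ (descSort h) := by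
  rw [piOp, dif_pos h]; rfl

lemma descSort_mul_swapAt (h : i + 1 < n) (μ : PermN n) :
    descSort h (μ * swapAt n i h) = descSort h μ := by
  have hne : μ ⟨i + 1, h⟩ ≠ μ ⟨i, Nat.lt_of_succ_lt h⟩ := by simp [Fin.ext_iff]
  simp only [descSort, swapAt, Perm.mul_apply, swap_apply_left, swap_apply_right, mul_assoc,
    swap_mul_self, mul_one]
  split_ifs with h₁ h₂ h₂
  · exact absurd h₁ (lt_asymm h₂)
  · rfl
  · rfl
  · exact absurd (lt_or_gt_of_ne hne) (by tauto)

lemma swapAt_lt_swapAt_iff (hj : j + 1 < n) {x y : Fin n}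
    (h₁ : ¬(x = ⟨j, Nat.lt_of_succ_lt hj⟩ ∧ y = ⟨j + 1, hj⟩))
    (h₂ : ¬(x = ⟨j + 1, hj⟩ ∧ y = ⟨j, Nat.lt_of_succ_lt hj⟩)) :
    swapAt n j hj x < swapAt n j hj y ↔ x < y := by
  simp only [swapAt, swap_apply_def]
  split_ifs <;> simp only [Fin.ext_iff, Fin.lt_def] at * <;> omega

lemma descSort_swapAt_mul (h : i + 1 < n) (hj : j + 1 < n) (μ : PermN n) :
    descSort h (swapAt n j hj * μ) = swapAt n j hj * descSort h μ ∨
      swapAt n j hj * μ = μ * swapAt n i h := by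
  by_cases hc : swapAt n j hj = swap (μ ⟨i + 1, h⟩) (μ ⟨i, Nat.lt_of_succ_lt h⟩)
  · right
    rw [hc, swap_apply_apply, inv_mul_cancel_right, swapAt, swap_comm]
  · left
    have hlt := swapAt_lt_swapAt_iff hj (x := μ ⟨i + 1, h⟩) (y := μ ⟨i, Nat.lt_of_succ_lt h⟩)
      (fun ⟨hx, hy⟩ => hc (by rw [hx, hy]; rfl))
      (fun ⟨hx, hy⟩ => hc (by rw [hx, hy, swap_comm]; rfl))
    simp only [descSort, Perm.mul_apply, hlt]
    split_ifs <;> simp [mul_assoc]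

lemma leftMulOp_piOp_of_antisymm (hj : j + 1 < n) {v : CS n}
    (hv : leftMulOp n (swapAt n j hj) v = -v) :
    leftMulOp n (swapAt n j hj) (piOp n i v) = -piOp n i v := by
  by_cases hi : i + 1 < n
  swap
  · rw [piOp, dif_neg hi]; exact hv
  set T := leftMulOp n (swapAt n j hj)
  have hTT (x : CS n) : T (T x) = x := by
    rw [← Module.End.mul_apply, leftMulOp_swapAt_mul_self hj, Module.End.one_apply]
  -- `v = (1 - T) (v / 2)`, so it suffices that this operator vanishes
  have hzero : (1 + T) * piOp n i * (1 - T) = 0 := by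
    refine lhom_ext fun μ c => ?_
    rcases descSort_swapAt_mul hi hj μ with hμ | hμ
    · have hcomm : piOp n i (T (single μ c)) = T (piOp n i (single μ c)) := by
        simp [T, piOp_eq hi, hμ]
      simp [hcomm, hTT]
    · have hsame : piOp n i (T (single μ c)) = piOp n i (single μ c) := by
        simp [T, piOp_eq hi, hμ, descSort_mul_swapAt]
      simp [hsame]
  have h2 : (1 - T) v = (2 : ℂ) • v := by
    rw [LinearMap.sub_apply, Module.End.one_apply, hv, sub_neg_eq_add, two_smul]
  have hv' := LinearMap.congr_fun hzero v
  rw [Module.End.mul_apply, Module.End.mul_apply, h2, map_smul, map_smul, LinearMap.zero_apply,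
    smul_eq_zero, LinearMap.add_apply, Module.End.one_apply] at hv'
  exact eq_neg_of_add_eq_zero_right (hv'.resolve_left two_ne_zero)

end Sorting

lemma apply_mem_PD_of_mem_HS {n : ℕ} {D : Set ℕ} {f : Module.End ℂ (CS n)} (hf : f ∈ HS n)
    {v : CS n} (hv : v ∈ PD n D) : f v ∈ PD n D := by
  induction hf using Algebra.adjoin_induction generalizing v with
  | mem g hg =>
    refine mem_PD_iff.mpr fun j hj hjD => ?_
    have hvj := mem_PD_iff.mp hv j hj hjD
    rcases hg with ⟨i, hi, rfl⟩ | ⟨i, hi, rfl⟩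
    · rw [sigmaOp_eq hi, ← Module.End.mul_apply, (commute_leftMulOp_rightMulOp _ _).eq,
        Module.End.mul_apply, hvj, map_neg]
    · exact leftMulOp_piOp_of_antisymm hj hvj
  | algebraMap r => exact Submodule.smul_mem _ r hv
  | add f g _ _ hf hg => exact add_mem (hf hv) (hg hv)
  | mul f g _ _ hf hg => exact hf (hg hv)

theorem vD_generates_general (n : ℕ) (D : Set ℕ) :
    (PD n D : Set (CS n)) =
      Set.range (fun a : HS n => (a : Module.End ℂ (CS n)) (vD n D)) := by
  ext v
  constructor
  · intro hv
    have hcard : (Fintype.card (Young n D) : ℂ) ≠ 0 := Nat.cast_ne_zero.mpr Fintype.card_ne_zero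
    refine ⟨⟨(Fintype.card (Young n D) : ℂ)⁻¹ • rightConvOp v,
      Subalgebra.smul_mem _ (rightConvOp_mem_HS v) _⟩, ?_⟩
    simp only [LinearMap.smul_apply, rightConvOp_apply_vD hv, smul_smul, inv_mul_cancel₀ hcard,
      one_smul]
  · rintro ⟨⟨f, hf⟩, rfl⟩
    exact apply_mem_PD_of_mem_HS hf vD_mem_PD

/-- `v_D` generates `P_D` as a right `H𝔖ₙ`-module:
`P_D = v_D · H𝔖ₙ = {v_D · f : f ∈ H𝔖ₙ}`. -/
theorem vD_generates (n : ℕ) (hn : 1 ≤ n) (D : Set ℕ) (hD : ∀ i ∈ D, i + 1 < n) :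
    (PD n D : Set (CS n)) =
      Set.range (fun a : HS n => (a : Module.End ℂ (CS n)) (vD n D)) :=
  vD_generates_general n D

end
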